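/- Let 7/3 < q < p < 5 and let Θ ∈ H¹(ℝ³)\{0} satisfy 4‖∇Θ‖²_{L²} − (3(p−1)(3p+1)/(4(p+1)))‖Θ‖^{p+1}_{L^{p+1}} + (3(q−1)(3q+1)/(4(q+1)))‖Θ‖^{q+1}_{L^{q+1}} ≥ 0. Then G(Θ) ≥ ((3p−7)/(3p+1))‖∇Θ‖²_{L²} + (9(q−1)(p−q)/(2(q+1)(3p+1)))‖Θ‖^{q+1}_{L^{q+1}} ≥ ((3p−7)/(3p+1))‖∇Θ‖²_{L²}. -/

import Mathlib

open Real Set MeasureTheory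

noncomputable section

abbrev E3 := EuclideanSpace ℝ (Fin 3)

/-- `‖∇φ‖²_{L²(ℝ³)}`. -/
def gradNormSq (φ : E3 → ℂ) : ℝ := ∫ x : E3, ‖fderiv ℝ φ x‖ ^ 2

/-- `‖φ‖^r_{L^r(ℝ³)}`. -/
def lpPow (φ : E3 → ℂ) (r : ℝ) : ℝ := ∫ x : E3, ‖φ x‖ ^ r

/-- The Pohozaev functional `G`. -/
def Gfun (p q : ℝ) (φ : E3 → ℂ) : ℝ :=
  gradNormSq φ - (3 * (p - 1) / (2 * (p + 1))) * lpPow φ (p + 1)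
    + (3 * (q - 1) / (2 * (q + 1))) * lpPow φ (q + 1)

lemma lpPow_nonneg (φ : E3 → ℂ) (r : ℝ) : 0 ≤ lpPow φ r :=
  integral_nonneg fun _ => by positivity

lemma pohozaev_eq_bound_add {p q G P Q : ℝ} (hp : p + 1 ≠ 0) (hq : q + 1 ≠ 0)
    (h3p : 3 * p + 1 ≠ 0) :
    G - 3 * (p - 1) / (2 * (p + 1)) * P + 3 * (q - 1) / (2 * (q + 1)) * Q
      = (3 * p - 7) / (3 * p + 1) * G + 9 * (q - 1) * (p - q) / (2 * (q + 1) * (3 * p + 1)) * Q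
        + 2 / (3 * p + 1) * (4 * G - 3 * (p - 1) * (3 * p + 1) / (4 * (p + 1)) * P
          + 3 * (q - 1) * (3 * q + 1) / (4 * (q + 1)) * Q) := by
  field_simp
  ring

theorem coercivity_case_one_general (p q : ℝ) (hq : 7 / 3 < q) (hqp : q < p)
    (Θ : E3 → ℂ)
    (hcase : 0 ≤ 4 * gradNormSq Θ
        - (3 * (p - 1) * (3 * p + 1) / (4 * (p + 1))) * lpPow Θ (p + 1)
        + (3 * (q - 1) * (3 * q + 1) / (4 * (q + 1))) * lpPow Θ (q + 1)) :
    Gfun p q Θ ≥ (3 * p - 7) / (3 * p + 1) * gradNormSq Θ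
        + 9 * (q - 1) * (p - q) / (2 * (q + 1) * (3 * p + 1)) * lpPow Θ (q + 1) ∧
    (3 * p - 7) / (3 * p + 1) * gradNormSq Θ
        + 9 * (q - 1) * (p - q) / (2 * (q + 1) * (3 * p + 1)) * lpPow Θ (q + 1)
      ≥ (3 * p - 7) / (3 * p + 1) * gradNormSq Θ := by
  have h3p : 0 < 3 * p + 1 := by linarith
  have hcoeff : 0 ≤ 9 * (q - 1) * (p - q) / (2 * (q + 1) * (3 * p + 1)) := by
    have : 0 < q - 1 := by linarith
    have : 0 < p - q := by linarith
    have : 0 < q + 1 := by linarith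
    positivity
  constructor
  · rw [Gfun, pohozaev_eq_bound_add (by linarith) (by linarith) h3p.ne']
    exact le_add_of_nonneg_right (mul_nonneg (by positivity) hcase)
  · exact le_add_of_nonneg_right (mul_nonneg hcoeff (lpPow_nonneg Θ _))

/-- Case 1 of the coercivity lemma: for `7/3 < q < p < 5` and nonzero `Θ ∈ H¹(ℝ³)` with
`4‖∇Θ‖² − (3(p−1)(3p+1)/(4(p+1)))‖Θ‖^{p+1}_{p+1} + (3(q−1)(3q+1)/(4(q+1)))‖Θ‖^{q+1}_{q+1} ≥ 0`,
one has
`G(Θ) ≥ ((3p−7)/(3p+1))‖∇Θ‖² + (9(q−1)(p−q)/(2(q+1)(3p+1)))‖Θ‖^{q+1}_{q+1}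
      ≥ ((3p−7)/(3p+1))‖∇Θ‖²`. -/
theorem coercivity_case_one (p q : ℝ) (hq : 7 / 3 < q) (hqp : q < p) (hp : p < 5)
    (Θ : E3 → ℂ)
    (hΘdiff : Differentiable ℝ Θ)
    (hΘL2 : MemLp Θ 2 (volume : Measure E3))
    (hΘH1 : MemLp (fun x => fderiv ℝ Θ x) 2 (volume : Measure E3))
    (hΘne : Θ ≠ 0)
    (hcase : 0 ≤ 4 * gradNormSq Θ
        - (3 * (p - 1) * (3 * p + 1) / (4 * (p + 1))) * lpPow Θ (p + 1)
        + (3 * (q - 1) * (3 * q + 1) / (4 * (q + 1))) * lpPow Θ (q + 1)) :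
    Gfun p q Θ ≥ (3 * p - 7) / (3 * p + 1) * gradNormSq Θ
        + 9 * (q - 1) * (p - q) / (2 * (q + 1) * (3 * p + 1)) * lpPow Θ (q + 1) ∧
    (3 * p - 7) / (3 * p + 1) * gradNormSq Θ
        + 9 * (q - 1) * (p - q) / (2 * (q + 1) * (3 * p + 1)) * lpPow Θ (q + 1)
      ≥ (3 * p - 7) / (3 * p + 1) * gradNormSq Θ :=
  coercivity_case_one_general p q hq hqp Θ hcase

end
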